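/- (Van der Corput lemma) Let ψ be real-valued and C^k on (a,b) with k ≥ 2, and suppose |ψ^{(k)}(x)| ≥ c > 0 for all x ∈ (a,b). Then for every λ ≠ 0, |∫_a^b e^{iλψ(x)} dx| ≤ (5·2^{k-1} − 2)·|cλ|^{-1/k}. -/

import Mathlib

/-!
Stein's induction on `k`. For `k = 1`, with `ψ'` monotone and `|ψ'| ≥ c`, write
`e^{iλψ} = (iλψ')⁻¹ (e^{iλψ})'` and integrate by parts: the two boundary terms and the total
variation of the monotone function `1/ψ'` each contribute at most `1/(c|λ|)`. For the inductive
step, if `ψ⁽ᵏ⁺¹⁾ ≥ c` then `ψ⁽ᵏ⁾` is increasing at rate `c`, so `|ψ⁽ᵏ⁾| ≥ cδ` outside an interval of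
length `2δ`. The order-`k` bound applies on the two outer pieces, the middle piece is estimated
trivially, and the choice `δ = |cλ|^{-1/(k+1)}` balances the two, giving the recursion
`M ↦ 2M + 2` for the constants.
-/

open Set MeasureTheory Complex intervalIntegral

theorem IsPreconnected.forall_pos_or_forall_neg {X : Type*} [TopologicalSpace X] {s : Set X}
    (hs : IsPreconnected s) {f : X → ℝ} (hf : ContinuousOn f s) (hne : ∀ x ∈ s, f x ≠ 0) :
    (∀ x ∈ s, 0 < f x) ∨ ∀ x ∈ s, f x < 0 := by
  by_contra! ⟨⟨x, hx, hfx⟩, y, hy, hfy⟩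
  obtain ⟨z, hz, hfz⟩ := hs.intermediate_value hx hy hf ⟨hfx, hfy⟩
  exact hne z hz hfz

section IteratedDeriv
variable {𝕜 F : Type*} [NontriviallyNormedField 𝕜] [NormedAddCommGroup F] [NormedSpace 𝕜 F]
  {f : 𝕜 → F} {s : Set 𝕜} {n : WithTop ℕ∞} {m : ℕ}

theorem ContDiffOn.continuousOn_iteratedDeriv_of_isOpen (h : ContDiffOn 𝕜 n f s) (hmn : m ≤ n)
    (hs : IsOpen s) : ContinuousOn (iteratedDeriv m f) s :=
  (h.continuousOn_iteratedDerivWithin hmn hs.uniqueDiffOn).congr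
    (iteratedDerivWithin_of_isOpen hs).symm

theorem ContDiffOn.differentiableOn_iteratedDeriv_of_isOpen (h : ContDiffOn 𝕜 n f s) (hmn : m < n)
    (hs : IsOpen s) : DifferentiableOn 𝕜 (iteratedDeriv m f) s :=
  (h.differentiableOn_iteratedDerivWithin hmn hs.uniqueDiffOn).congr
    (iteratedDerivWithin_of_isOpen hs).symm

end IteratedDeriv

theorem mul_sub_le_iteratedDeriv_sub {ψ : ℝ → ℝ} {a b c : ℝ} {k : ℕ}
    (hψ : ContDiffOn ℝ (k + 1) ψ (Ioo a b)) (hlow : ∀ x ∈ Ioo a b, c ≤ iteratedDeriv (k + 1) ψ x) :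
    ∀ x ∈ Ioo a b, ∀ y ∈ Ioo a b, x ≤ y →
      c * (y - x) ≤ iteratedDeriv k ψ y - iteratedDeriv k ψ x := by
  have hdiff : DifferentiableOn ℝ (iteratedDeriv k ψ) (Ioo a b) :=
    hψ.differentiableOn_iteratedDeriv_of_isOpen (by norm_cast; omega) isOpen_Ioo
  refine (convex_Ioo a b).mul_sub_le_image_sub_of_le_deriv hdiff.continuousOn
    (by rwa [interior_Ioo]) fun x hx => ?_
  rw [interior_Ioo] at hx
  simpa only [← iteratedDeriv_succ] using hlow x hx

theorem MonotoneOn.exists_nonpos_nonneg {g : ℝ → ℝ} {a b : ℝ} (hg : MonotoneOn g (Ioo a b))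
    (hab : a ≤ b) : ∃ x₀ ∈ Icc a b, (∀ x ∈ Ioo a x₀, g x ≤ 0) ∧ ∀ x ∈ Ioo x₀ b, 0 ≤ g x := by
  set S := insert a {x ∈ Ioo a b | g x ≤ 0}
  have hS : BddAbove S := ⟨b, by rintro x (rfl | ⟨hx, -⟩) <;> [exact hab; exact hx.2.le]⟩
  refine ⟨sSup S, ⟨le_csSup hS (mem_insert a _), csSup_le (insert_nonempty _ _) ?_⟩, ?_, ?_⟩
  · rintro x (rfl | ⟨hx, -⟩) <;> [exact hab; exact hx.2.le]
  · rintro x ⟨hax, hx⟩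
    obtain ⟨y, hyS, hxy⟩ := exists_lt_of_lt_csSup (insert_nonempty _ _) hx
    rcases hyS with rfl | ⟨hy, hgy⟩
    · exact absurd hax hxy.not_gt
    · exact (hg ⟨hax, hxy.trans hy.2⟩ hy hxy.le).trans hgy
  · rintro x ⟨hx, hxb⟩
    by_contra! hgx
    have hax : a < x := (le_csSup hS (mem_insert a _)).trans_lt hx
    exact hx.not_ge (le_csSup hS (mem_insert_of_mem _ ⟨⟨hax, hxb⟩, hgx.le⟩))

theorem exists_Icc_le_abs_outside {g : ℝ → ℝ} {a b c t : ℝ} (hab : a ≤ b) (hc : 0 ≤ c)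
    (ht : 0 ≤ t)
    (hg : ∀ x ∈ Ioo a b, ∀ y ∈ Ioo a b, x ≤ y → c * (y - x) ≤ g y - g x) :
    ∃ u v, a ≤ u ∧ u ≤ v ∧ v ≤ b ∧ v - u ≤ 2 * t ∧
      (∀ x ∈ Ioo a u, c * t ≤ |g x|) ∧ ∀ x ∈ Ioo v b, c * t ≤ |g x| := by
  have hmono : MonotoneOn g (Ioo a b) := fun x hx y hy hxy =>
    sub_nonneg.1 ((mul_nonneg hc (sub_nonneg.2 hxy)).trans (hg x hx y hy hxy))
  obtain ⟨x₀, ⟨hax₀, hx₀b⟩, hneg, hpos⟩ := hmono.exists_nonpos_nonneg hab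
  refine ⟨max a (x₀ - t), min b (x₀ + t), le_max_left _ _, ?_, min_le_left _ _, ?_, ?_, ?_⟩
  · exact max_le (le_min hab (by linarith)) (le_min (by linarith) (by linarith))
  · linarith [le_max_right a (x₀ - t), min_le_right b (x₀ + t)]
  · rintro x ⟨hax, hxu⟩
    have hxt : x + t < x₀ := by
      rcases lt_max_iff.1 hxu with h | h <;> linarith
    have hgrow := hg x ⟨hax, by linarith⟩ (x + t) ⟨by linarith, by linarith⟩ (by linarith)
    rw [add_sub_cancel_left] at hgrow
    linarith [hneg (x + t) ⟨by linarith, hxt⟩, neg_le_abs (g x)]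
  · rintro x ⟨hvx, hxb⟩
    have hxt : x₀ < x - t := by
      rcases min_lt_iff.1 hvx with h | h <;> linarith
    have hgrow := hg (x - t) ⟨by linarith, by linarith⟩ x ⟨by linarith, hxb⟩ (by linarith)
    rw [sub_sub_cancel] at hgrow
    linarith [hpos (x - t) ⟨hxt, by linarith⟩, le_abs_self (g x)]

theorem rpow_mul_self_rpow_neg_one_div {x k : ℝ} (hx : 0 < x) (hk : 0 < k) :
    (x ^ (-1 / (k + 1)) * x) ^ (-1 / k) = x ^ (-1 / (k + 1)) := by
  rw [← Real.rpow_add_one hx.ne', ← Real.rpow_mul hx.le]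
  congr 1
  field_simp
  ring

section Integral
variable {E : Type*} [NormedAddCommGroup E] [NormedSpace ℝ E] {f : ℝ → E} {a b u v : ℝ}

theorem norm_integral_le_add_add (hf : IntervalIntegrable f volume a b) (hau : a ≤ u)
    (huv : u ≤ v) (hvb : v ≤ b) :
    ‖∫ x in a..b, f x‖ ≤ ‖∫ x in a..u, f x‖ + ‖∫ x in u..v, f x‖ + ‖∫ x in v..b, f x‖ := by
  have hsub : ∀ {p q}, a ≤ p → p ≤ q → q ≤ b → IntervalIntegrable f volume p q :=
    fun hp hpq hq => hf.mono_set <| by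
      rw [uIcc_of_le hpq, uIcc_of_le (hp.trans (hpq.trans hq))]
      exact Icc_subset_Icc hp hq
  rw [← integral_add_adjacent_intervals (hsub le_rfl (hau.trans huv) hvb)
      (hsub (hau.trans huv) hvb le_rfl),
    ← integral_add_adjacent_intervals (hsub le_rfl hau (huv.trans hvb)) (hsub hau huv hvb)]
  exact (norm_add_le _ _).trans (add_le_add_left (norm_add_le _ _) _)

theorem norm_integral_le_of_forall_Icc_subset_Ioo {M : ℝ} (hab : a < b)
    (hf : IntervalIntegrable f volume a b) (hf1 : ∀ x, ‖f x‖ ≤ 1)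
    (hM : ∀ u v, a < u → u ≤ v → v < b → ‖∫ x in u..v, f x‖ ≤ M) :
    ‖∫ x in a..b, f x‖ ≤ M := by
  refine le_of_forall_pos_le_add fun ε hε => ?_
  set t := min (ε / 2) ((b - a) / 2)
  have ht : 0 < t := lt_min (by linarith) (by linarith)
  have htε : t ≤ ε / 2 := min_le_left _ _
  have htb : t ≤ (b - a) / 2 := min_le_right _ _
  have hend : ∀ p q, q - p = t → ‖∫ x in p..q, f x‖ ≤ t := fun p q h => by
    simpa [h, abs_of_pos ht] using
      norm_integral_le_of_norm_le_const (a := p) (b := q) fun x _ => hf1 x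
  calc ‖∫ x in a..b, f x‖
      ≤ ‖∫ x in a..a + t, f x‖ + ‖∫ x in a + t..b - t, f x‖ + ‖∫ x in b - t..b, f x‖ :=
        norm_integral_le_add_add hf (by linarith) (by linarith) (by linarith)
    _ ≤ t + M + t := by
        gcongr
        · exact hend _ _ (by ring)
        · exact hM _ _ (by linarith) (by linarith) (by linarith)
        · exact hend _ _ (by ring)
    _ ≤ M + ε := by linarith

end Integral

section Oscillatory
variable {a b lam : ℝ} {ψ : ℝ → ℝ}

theorem norm_exp_I_mul_ofReal_mul_ofReal (lam t : ℝ) : ‖exp (I * lam * t)‖ = 1 := by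
  simpa [mul_assoc] using norm_exp_I_mul_ofReal (lam * t)

theorem intervalIntegrable_exp_I_mul (hab : a ≤ b) (hψ : ContinuousOn ψ (Ioo a b)) :
    IntervalIntegrable (fun x => exp (I * lam * ψ x)) volume a b := by
  rw [intervalIntegrable_iff_integrableOn_Ioo_of_le hab]
  refine (integrableOn_const (C := (1 : ℝ)) measure_Ioo_lt_top.ne).mono' ?_
    (ae_of_all _ fun x => (norm_exp_I_mul_ofReal_mul_ofReal lam (ψ x)).le)
  exact (continuous_exp.comp_continuousOn
    (continuousOn_const.mul (continuous_ofReal.comp_continuousOn hψ))).aestronglyMeasurable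
    measurableSet_Ioo

theorem norm_integral_exp_I_mul_le_sub (hab : a ≤ b) :
    ‖∫ x in a..b, exp (I * lam * ψ x)‖ ≤ b - a := by
  simpa [abs_of_nonneg (sub_nonneg.2 hab)] using
    norm_integral_le_of_norm_le_const (a := a) (b := b) fun x _ =>
      (norm_exp_I_mul_ofReal_mul_ofReal lam (ψ x)).le

theorem norm_integral_exp_I_mul_le_of_hasDerivAt {φ h h' : ℝ → ℝ} (hab : a ≤ b) (hlam : lam ≠ 0)
    (hψ : ∀ x ∈ Icc a b, HasDerivAt ψ (φ x) x) (hh : ∀ x ∈ Icc a b, HasDerivAt h (h' x) x)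
    (hh' : ContinuousOn h' (Icc a b)) (hhφ : ∀ x ∈ Icc a b, h x * φ x = 1) :
    ‖∫ x in a..b, exp (I * lam * ψ x)‖ ≤ (|h a| + |h b| + ∫ x in a..b, |h' x|) / |lam| := by
  set e : ℝ → ℂ := fun x => exp (I * lam * ψ x)
  have he : ∀ x ∈ Icc a b, HasDerivAt e (e x * (I * lam * φ x)) x := fun x hx =>
    ((hψ x hx).ofReal_comp.const_mul (I * lam)).cexp
  have he_cont : ContinuousOn e (Icc a b) := fun x hx => (he x hx).continuousAt.continuousWithinAt
  rw [← uIcc_of_le hab] at he he_cont hh hh' hhφ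
  -- `h * e` is a primitive of `h' * e + I * lam * e` because `h * ψ' = 1`.
  have hF : ∀ x ∈ uIcc a b, HasDerivAt (fun x => (h x : ℂ) * e x) (h' x * e x + I * lam * e x) x :=
    fun x hx => ((hh x hx).ofReal_comp.mul (he x hx)).congr_deriv <| by
      have : (h x : ℂ) * φ x = 1 := by exact_mod_cast hhφ x hx
      linear_combination (I * lam * e x) * this
  have hh'e : IntervalIntegrable (fun x => (h' x : ℂ) * e x) volume a b :=
    ((continuous_ofReal.comp_continuousOn hh').mul he_cont).intervalIntegrable
  have he_int : IntervalIntegrable e volume a b := he_cont.intervalIntegrable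
  have hibp : I * lam * ∫ x in a..b, e x = h b * e b - h a * e a - ∫ x in a..b, h' x * e x := by
    rw [← integral_eq_sub_of_hasDerivAt hF (hh'e.add (he_int.const_mul _)),
      integral_add hh'e (he_int.const_mul _), intervalIntegral.integral_const_mul]
    ring
  have hnorm : ‖I * lam * ∫ x in a..b, e x‖ = |lam| * ‖∫ x in a..b, e x‖ := by simp
  rw [le_div_iff₀ (abs_pos.2 hlam), mul_comm, ← hnorm, hibp]
  calc ‖(h b : ℂ) * e b - h a * e a - ∫ x in a..b, h' x * e x‖
      ≤ ‖(h b : ℂ) * e b‖ + ‖(h a : ℂ) * e a‖ + ‖∫ x in a..b, h' x * e x‖ :=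
        (norm_sub_le _ _).trans (add_le_add_left (norm_sub_le _ _) _)
    _ ≤ |h b| + |h a| + ∫ x in a..b, |h' x| := by
        gcongr
        · simp [e, norm_exp_I_mul_ofReal_mul_ofReal]
        · simp [e, norm_exp_I_mul_ofReal_mul_ofReal]
        · refine (intervalIntegral.norm_integral_le_integral_norm hab).trans_eq ?_
          simp [e, norm_exp_I_mul_ofReal_mul_ofReal]
    _ = |h a| + |h b| + ∫ x in a..b, |h' x| := by ring

theorem norm_integral_exp_I_mul_le_of_monotone_deriv {φ φ' : ℝ → ℝ} {c : ℝ} (hab : a ≤ b)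
    (hlam : lam ≠ 0) (hc : 0 < c) (hψ : ∀ x ∈ Icc a b, HasDerivAt ψ (φ x) x)
    (hφ : ∀ x ∈ Icc a b, HasDerivAt φ (φ' x) x) (hφ'_cont : ContinuousOn φ' (Icc a b))
    (hφ'_nonneg : ∀ x ∈ Icc a b, 0 ≤ φ' x) (hlow : ∀ x ∈ Icc a b, c ≤ |φ x|) :
    ‖∫ x in a..b, exp (I * lam * ψ x)‖ ≤ 3 / (c * |lam|) := by
  have hφ_ne : ∀ x ∈ Icc a b, φ x ≠ 0 := fun x hx => abs_pos.1 (hc.trans_le (hlow x hx))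
  have hφ_cont : ContinuousOn φ (Icc a b) := fun x hx =>
    (hφ x hx).continuousAt.continuousWithinAt
  set h := fun x => (φ x)⁻¹
  set h' := fun x => -φ' x / φ x ^ 2
  have hh : ∀ x ∈ Icc a b, HasDerivAt h (h' x) x := fun x hx => (hφ x hx).inv (hφ_ne x hx)
  have hh'_cont : ContinuousOn h' (Icc a b) :=
    hφ'_cont.neg.div (hφ_cont.pow 2) fun x hx => pow_ne_zero 2 (hφ_ne x hx)
  have hint : ∫ x in a..b, |h' x| = h a - h b := by
    rw [integral_congr fun x hx => abs_of_nonpos (?_ : h' x ≤ 0), intervalIntegral.integral_neg,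
      integral_eq_sub_of_hasDerivAt (fun x hx => hh x (by rwa [← uIcc_of_le hab]))
        (hh'_cont.intervalIntegrable_of_Icc hab), neg_sub]
    rw [uIcc_of_le hab] at hx
    exact div_nonpos_of_nonpos_of_nonneg (neg_nonpos.2 (hφ'_nonneg x hx)) (sq_nonneg _)
  have habs : ∀ x ∈ Icc a b, |h x| ≤ c⁻¹ := fun x hx => by
    rw [abs_inv]
    exact inv_anti₀ hc (hlow x hx)
  have ha : a ∈ Icc a b := left_mem_Icc.2 hab
  have hb : b ∈ Icc a b := right_mem_Icc.2 hab
  -- `h a` and `h b` have the same sign, so `h a - h b` is at most `max |h a| |h b|`.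
  have hdiff : h a - h b ≤ c⁻¹ := by
    rcases isPreconnected_Icc.forall_pos_or_forall_neg hφ_cont hφ_ne with hpos | hneg
    · linarith [inv_pos.2 (hpos b hb), le_abs_self (h a), habs a ha]
    · linarith [inv_lt_zero.2 (hneg a ha), neg_abs_le (h b), habs b hb]
  calc ‖∫ x in a..b, exp (I * lam * ψ x)‖
      ≤ (|h a| + |h b| + ∫ x in a..b, |h' x|) / |lam| :=
        norm_integral_exp_I_mul_le_of_hasDerivAt hab hlam hψ hh hh'_cont fun x hx =>
          inv_mul_cancel₀ (hφ_ne x hx)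
    _ ≤ (c⁻¹ + c⁻¹ + c⁻¹) / |lam| := by
        rw [hint]
        gcongr
        exacts [habs a ha, habs b hb]
    _ = 3 / (c * |lam|) := by field_simp; ring

end Oscillatory

-- The sign condition on `ψ⁽ᵏ⁺¹⁾` makes `ψ⁽ᵏ⁾` monotone, as the first derivative test requires.
def VanDerCorputBound (k : ℕ) (M : ℝ) : Prop :=
  ∀ a b : ℝ, a ≤ b → ∀ ψ : ℝ → ℝ, ContDiffOn ℝ (k + 1) ψ (Ioo a b) →
    (∀ x ∈ Ioo a b, 0 ≤ iteratedDeriv (k + 1) ψ x) →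
    ∀ c : ℝ, 0 < c → (∀ x ∈ Ioo a b, c ≤ |iteratedDeriv k ψ x|) →
    ∀ lam : ℝ, lam ≠ 0 →
      ‖∫ x in a..b, exp (I * lam * ψ x)‖ ≤ M * |c * lam| ^ (-(1 : ℝ) / k)

theorem vanDerCorputBound_one : VanDerCorputBound 1 3 := by
  intro a b hab ψ hψ hmono c hc hlow lam hlam
  rw [Nat.cast_one, div_one, Real.rpow_neg_one, abs_mul, abs_of_pos hc, ← div_eq_mul_inv]
  rcases hab.eq_or_lt with rfl | hab
  · simp only [integral_same, norm_zero]
    positivity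
  simp only [iteratedDeriv_succ, iteratedDeriv_zero] at hmono hlow
  have hIoo : IsOpen (Ioo a b) := isOpen_Ioo
  have hψ' : DifferentiableOn ℝ (deriv ψ) (Ioo a b) := by
    simpa only [iteratedDeriv_one] using
      hψ.differentiableOn_iteratedDeriv_of_isOpen (m := 1) (by norm_num) hIoo
  have hψ'' : ContinuousOn (deriv (deriv ψ)) (Ioo a b) := by
    simpa only [iteratedDeriv_succ, iteratedDeriv_zero] using
      hψ.continuousOn_iteratedDeriv_of_isOpen (m := 2) le_rfl hIoo
  refine norm_integral_le_of_forall_Icc_subset_Ioo hab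
    (intervalIntegrable_exp_I_mul hab.le hψ.continuousOn)
    (fun x => (norm_exp_I_mul_ofReal_mul_ofReal _ _).le) fun u v hau huv hvb => ?_
  have hsub : Icc u v ⊆ Ioo a b := Icc_subset_Ioo hau hvb
  exact norm_integral_exp_I_mul_le_of_monotone_deriv huv hlam hc
    (fun x hx => (hψ.differentiableOn (by norm_num)).hasDerivAt (hIoo.mem_nhds (hsub hx)))
    (fun x hx => hψ'.hasDerivAt (hIoo.mem_nhds (hsub hx))) (hψ''.mono hsub)
    (fun x hx => hmono x (hsub hx)) fun x hx => hlow x (hsub hx)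

theorem VanDerCorputBound.norm_integral_le {k : ℕ} {M a b c lam : ℝ} {ψ : ℝ → ℝ}
    (hM : VanDerCorputBound k M) (hk : 1 ≤ k) (hab : a ≤ b)
    (hψ : ContDiffOn ℝ (k + 1) ψ (Ioo a b)) (hc : 0 < c)
    (hlow : ∀ x ∈ Ioo a b, c ≤ |iteratedDeriv (k + 1) ψ x|) (hlam : lam ≠ 0) :
    ‖∫ x in a..b, exp (I * lam * ψ x)‖ ≤ (2 * M + 2) * |c * lam| ^ (-(1 : ℝ) / (k + 1 : ℕ)) := by
  wlog hpos : ∀ x ∈ Ioo a b, c ≤ iteratedDeriv (k + 1) ψ x generalizing ψ lam with H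
  · have hne : ∀ x ∈ Ioo a b, iteratedDeriv (k + 1) ψ x ≠ 0 := fun x hx =>
      abs_pos.1 (hc.trans_le (hlow x hx))
    rcases isPreconnected_Ioo.forall_pos_or_forall_neg
      (hψ.continuousOn_iteratedDeriv_of_isOpen (by norm_cast) isOpen_Ioo) hne with hp | hn
    · exact absurd (fun x hx => abs_of_pos (hp x hx) ▸ hlow x hx) hpos
    -- `(-ψ, -lam)` has the same integrand as `(ψ, lam)`.
    · have := H (ψ := -ψ) (lam := -lam) hψ.neg (by simpa using hlow) (neg_ne_zero.2 hlam)
        fun x hx => by simpa [abs_of_neg (hn x hx)] using hlow x hx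
      simpa using this
  set δ := |c * lam| ^ (-(1 : ℝ) / (k + 1 : ℕ))
  have hδ : 0 < δ := by positivity
  set g := iteratedDeriv k ψ
  obtain ⟨u, v, hau, huv, hvb, hvu, hleft, hright⟩ :=
    exists_Icc_le_abs_outside hab hc.le hδ.le (mul_sub_le_iteratedDeriv_sub hψ hpos)
  have hscale : |c * δ * lam| ^ (-(1 : ℝ) / k) = δ := by
    rw [mul_right_comm, abs_mul, abs_of_pos hδ, mul_comm]
    simp only [δ, Nat.cast_succ]
    exact rpow_mul_self_rpow_neg_one_div (by positivity) (by exact_mod_cast hk)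
  have hpiece : ∀ p q, a ≤ p → p ≤ q → q ≤ b → (∀ x ∈ Ioo p q, c * δ ≤ |g x|) →
      ‖∫ x in p..q, exp (I * lam * ψ x)‖ ≤ M * δ := fun p q hap hpq hqb hg => by
    have hsub : Ioo p q ⊆ Ioo a b := Ioo_subset_Ioo hap hqb
    have := hM p q hpq ψ (hψ.mono hsub) (fun x hx => hc.le.trans (hpos x (hsub hx))) (c * δ)
      (by positivity) hg lam hlam
    rwa [hscale] at this
  calc ‖∫ x in a..b, exp (I * lam * ψ x)‖
      ≤ ‖∫ x in a..u, exp (I * lam * ψ x)‖ + ‖∫ x in u..v, exp (I * lam * ψ x)‖ +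
          ‖∫ x in v..b, exp (I * lam * ψ x)‖ :=
        norm_integral_le_add_add (intervalIntegrable_exp_I_mul hab hψ.continuousOn) hau huv hvb
    _ ≤ M * δ + 2 * δ + M * δ := by
        gcongr
        · exact hpiece a u le_rfl hau (huv.trans hvb) hleft
        · exact (norm_integral_exp_I_mul_le_sub huv).trans hvu
        · exact hpiece v b (hau.trans huv) hvb le_rfl hright
    _ = (2 * M + 2) * δ := by ring

theorem VanDerCorputBound.succ {k : ℕ} {M : ℝ} (hM : VanDerCorputBound k M) (hk : 1 ≤ k) :
    VanDerCorputBound (k + 1) (2 * M + 2) :=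
  fun _ _ hab _ hψ _ _ hc hlow _ hlam =>
    hM.norm_integral_le hk hab (hψ.of_le (by norm_cast; omega)) hc hlow hlam

theorem two_mul_five_mul_two_pow_sub_two_add_two {k : ℕ} (hk : 1 ≤ k) :
    2 * (5 * 2 ^ (k - 1) - 2 : ℝ) + 2 = 5 * 2 ^ (k + 1 - 1) - 2 := by
  obtain ⟨i, rfl⟩ := Nat.exists_eq_add_of_le' hk
  simp only [Nat.add_sub_cancel, pow_succ]
  ring

theorem vanDerCorputBound {k : ℕ} (hk : 1 ≤ k) : VanDerCorputBound k (5 * 2 ^ (k - 1) - 2) := by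
  induction k, hk using Nat.le_induction with
  | base => norm_num [vanDerCorputBound_one]
  | succ k hk ih => simpa only [two_mul_five_mul_two_pow_sub_two_add_two hk] using ih.succ hk

/-- Van der Corput lemma: if `ψ` is real-valued, `Cᵏ` on `(a,b)` with `k ≥ 2` and
`|ψ⁽ᵏ⁾| ≥ c > 0` there, then for every `λ ≠ 0`,
`|∫_a^b e^{iλψ(x)} dx| ≤ (5·2^{k-1} − 2) |cλ|^{-1/k}`. -/
theorem van_der_corput (a b : ℝ) (hab : a < b) (k : ℕ) (hk : 2 ≤ k)
    (ψ : ℝ → ℝ) (hψ : ContDiffOn ℝ k ψ (Set.Ioo a b))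
    (c : ℝ) (hc : 0 < c)
    (hlow : ∀ x ∈ Set.Ioo a b, c ≤ |iteratedDerivWithin k ψ (Set.Ioo a b) x|)
    (lam : ℝ) (hlam : lam ≠ 0) :
    ‖∫ x in a..b, Complex.exp (Complex.I * lam * ψ x)‖
      ≤ (5 * 2 ^ (k - 1) - 2 : ℝ) * |c * lam| ^ (-(1 : ℝ) / k) := by
  obtain ⟨j, rfl⟩ : ∃ j, k = j + 1 := ⟨k - 1, by omega⟩
  rw [← two_mul_five_mul_two_pow_sub_two_add_two (by omega)]
  refine (vanDerCorputBound (by omega)).norm_integral_le (by omega) hab.le (by exact_mod_cast hψ)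
    hc (fun x hx => ?_) hlam
  rw [← iteratedDerivWithin_of_isOpen isOpen_Ioo hx]
  exact hlow x hx
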